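/- Let X be a Banach space and suppose there exists a Lipschitz map f : X → ℓ_∞ which is almost uncollapsed. Then X Lipschitz embeds into ℓ_∞, i.e., there exist a map F : X → ℓ_∞ and constants c, C > 0 such that c‖x−y‖ ≤ ‖F(x) − F(y)‖ ≤ C‖x−y‖ for all x,y ∈ X. -/

import Mathlib

open Metric
open scoped ENNReal NNReal

/-- Exact compression modulus. -/
noncomputable def exactComp {M N : Type*} [PseudoMetricSpace M] [PseudoMetricSpace N]
    (f : M → N) (t : ℝ) : ℝ :=
  sInf {r : ℝ | ∃ x y : M, dist x y = t ∧ dist (f x) (f y) = r}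

/-- Coarse map: the expansion modulus is finite for every t. -/
def Coarse {M N : Type*} [PseudoMetricSpace M] [PseudoMetricSpace N] (f : M → N) : Prop :=
  ∀ t : ℝ, ∃ C : ℝ, ∀ x y : M, dist x y ≤ t → dist (f x) (f y) ≤ C

/-- Solvent map. -/
def Solvent {M N : Type*} [PseudoMetricSpace M] [PseudoMetricSpace N] (f : M → N) : Prop :=
  ∀ n : ℕ, ∃ R : ℝ, 0 < R ∧ ∀ x y : M,
    dist x y ∈ Set.Icc R (R + (n : ℝ)) → (n : ℝ) < dist (f x) (f y)

/-- Almost uncollapsed map. -/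
noncomputable def AlmostUncollapsed {M N : Type*} [PseudoMetricSpace M] [PseudoMetricSpace N]
    (f : M → N) : Prop :=
  ∃ t : ℝ, 0 < t ∧ 0 < exactComp f t

/-!
Rescaling `f` by `x ↦ q⁻¹ (f (q x) - f 0)` preserves its Lipschitz constant and moves the
scale `t` at which `f` separates points to every scale `t / q`. If `‖f u - f w‖ ≥ ρ` whenever
`‖u - w‖ = t`, then `f` still separates by `ρ / 2` pairs at distance slightly below `t`: extend
the segment from `u` through `v` to length `t` and use the Lipschitz bound on the short
remainder. Hence for `x ≠ y` some rational `q` gives `‖f_q x - f_q y‖ ≳ ‖x - y‖`, and the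
countably many rescalings `f_q`, placed side by side in one copy of `ℓ_∞`, form a bi-Lipschitz
embedding.
-/

lemma exactComp_le_dist {M N : Type*} [PseudoMetricSpace M] [PseudoMetricSpace N]
    (f : M → N) {t : ℝ} {u w : M} (h : dist u w = t) : exactComp f t ≤ dist (f u) (f w) :=
  csInf_le ⟨0, by rintro r ⟨a, b, -, rfl⟩; exact dist_nonneg⟩ ⟨u, w, h, rfl⟩

section Rescale

variable {E F : Type*} [NormedAddCommGroup E] [NormedSpace ℝ E]
  [NormedAddCommGroup F] [NormedSpace ℝ F]

lemma exists_dist_eq_dist_eq_sub {u v : E} (huv : u ≠ v) {t : ℝ} (ht : dist u v ≤ t) :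
    ∃ w, dist u w = t ∧ dist v w = t - dist u v := by
  have hd : 0 < dist u v := dist_pos.2 huv
  have hc : 1 ≤ t / dist u v := (one_le_div hd).2 ht
  refine ⟨AffineMap.lineMap u v (t / dist u v), ?_, ?_⟩
  · rw [dist_left_lineMap, Real.norm_of_nonneg (by linarith), div_mul_cancel₀ _ hd.ne']
  · rw [dist_right_lineMap, norm_sub_rev, Real.norm_of_nonneg (by linarith), sub_mul,
      div_mul_cancel₀ _ hd.ne', one_mul]

lemma LipschitzWith.le_dist_add_mul_of_forall_dist_eq {Y : Type*} [PseudoMetricSpace Y]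
    {f : E → Y} {K : ℝ≥0} (hf : LipschitzWith K f) {t ρ : ℝ}
    (hρ : ∀ u w, dist u w = t → ρ ≤ dist (f u) (f w)) {u v : E} (huv : u ≠ v)
    (ht : dist u v ≤ t) : ρ ≤ dist (f u) (f v) + K * (t - dist u v) := by
  obtain ⟨w, huw, hvw⟩ := exists_dist_eq_dist_eq_sub huv ht
  calc ρ ≤ dist (f u) (f w) := hρ u w huw
    _ ≤ dist (f u) (f v) + dist (f v) (f w) := dist_triangle _ _ _
    _ ≤ dist (f u) (f v) + K * (t - dist u v) := by
      gcongr
      exact hvw ▸ hf.dist_le_mul v w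

noncomputable def rescaleAtZero (f : E → F) (q : ℝ) (x : E) : F :=
  q⁻¹ • (f (q • x) - f 0)

@[simp]
lemma rescaleAtZero_zero (f : E → F) (q : ℝ) : rescaleAtZero f q 0 = 0 := by
  simp [rescaleAtZero]

lemma dist_rescaleAtZero (f : E → F) (q : ℝ) (x y : E) :
    dist (rescaleAtZero f q x) (rescaleAtZero f q y) = dist (f (q • x)) (f (q • y)) / |q| := by
  rw [rescaleAtZero, rescaleAtZero, dist_smul₀, dist_sub_right, Real.norm_eq_abs, abs_inv,
    inv_mul_eq_div]

lemma lipschitzWith_rescaleAtZero {f : E → F} {K : ℝ≥0} (hf : LipschitzWith K f) (q : ℝ) :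
    LipschitzWith K (rescaleAtZero f q) := by
  refine LipschitzWith.of_dist_le_mul fun x y => ?_
  rw [dist_rescaleAtZero]
  refine div_le_of_le_mul₀ (abs_nonneg q) (by positivity) ?_
  calc dist (f (q • x)) (f (q • y)) ≤ K * dist (q • x) (q • y) := hf.dist_le_mul _ _
    _ = K * dist x y * |q| := by rw [dist_smul₀, Real.norm_eq_abs]; ring

lemma LipschitzWith.exists_rat_le_dist_rescaleAtZero {f : E → F} {K : ℝ≥0}
    (hf : LipschitzWith K f) {t ρ : ℝ} (ht : 0 < t) (hρ₀ : 0 < ρ)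
    (hρ : ∀ u w, dist u w = t → ρ ≤ dist (f u) (f w)) {x y : E} (hxy : x ≠ y) :
    ∃ q : ℚ, ρ / (2 * t) * dist x y ≤
      dist (rescaleAtZero f q x) (rescaleAtZero f q y) := by
  have hs : 0 < dist x y := dist_pos.2 hxy
  obtain ⟨δ, hδ, hδt, hKδ⟩ : ∃ δ, 0 < δ ∧ δ ≤ t ∧ K * δ ≤ ρ / 2 :=
    ⟨min t (ρ / (2 * (K + 1))), by positivity, min_le_left _ _, by
      calc K * min t (ρ / (2 * (K + 1))) ≤ (K + 1) * (ρ / (2 * (K + 1))) := by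
            gcongr
            · linarith
            · exact min_le_right _ _
        _ = ρ / 2 := by field_simp⟩
  obtain ⟨q, hq_lo, hq_hi⟩ := exists_rat_btwn (div_lt_div_of_pos_right (sub_lt_self t hδ) hs)
  have hq : (0 : ℝ) < q := lt_of_le_of_lt (div_nonneg (sub_nonneg.2 hδt) hs.le) hq_lo
  have hqs : q * dist x y ≤ t := (le_div_iff₀ hs).1 hq_hi.le
  have hdist : dist ((q : ℝ) • x) ((q : ℝ) • y) = q * dist x y := by
    rw [dist_smul₀, Real.norm_of_nonneg hq.le]
  have hsep := hf.le_dist_add_mul_of_forall_dist_eq hρ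
    ((smul_right_injective E hq.ne').ne hxy) (hdist ▸ hqs)
  rw [hdist] at hsep
  have hK : K * (t - q * dist x y) ≤ ρ / 2 :=
    calc (K : ℝ) * (t - q * dist x y) ≤ K * δ := by
          gcongr
          linarith [(div_lt_iff₀ hs).1 hq_lo]
      _ ≤ ρ / 2 := hKδ
  refine ⟨q, ?_⟩
  calc ρ / (2 * t) * dist x y = ρ / 2 / (t / dist x y) := by field_simp
    _ ≤ ρ / 2 / q := by gcongr
    _ ≤ dist (f ((q : ℝ) • x)) (f ((q : ℝ) • y)) / q := by gcongr; linarith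
    _ = dist (rescaleAtZero f q x) (rescaleAtZero f q y) := by
      rw [dist_rescaleAtZero, abs_of_pos hq]

end Rescale

lemma exists_lipschitz_linfty_forall_dist_le {ι κ X : Type*} [Countable ι] [Nonempty ι]
    [Countable κ] [Nonempty κ] [PseudoMetricSpace X] (g : ι → X → lp (fun _ : κ => ℝ) ∞)
    {K : ℝ≥0} (hg : ∀ i, LipschitzWith K (g i)) (x₀ : X) (hg₀ : ∀ i, g i x₀ = 0) :
    ∃ F : X → lp (fun _ : ℕ => ℝ) ∞, LipschitzWith K F ∧
      ∀ i x y, dist (g i x) (g i y) ≤ dist (F x) (F y) := by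
  obtain ⟨s, hs⟩ := exists_surjective_nat (ι × κ)
  have hcoord : ∀ (a b : lp (fun _ : κ => ℝ) ∞) k, |a k - b k| ≤ dist a b := fun a b k => by
    simpa [dist_eq_norm] using lp.norm_apply_le_norm ENNReal.top_ne_zero (a - b) k
  have hmem : ∀ x, Memℓp (fun n => g (s n).1 x (s n).2) ∞ := fun x => by
    refine memℓp_infty ⟨K * dist x x₀, ?_⟩
    rintro r ⟨n, rfl⟩
    simpa [hg₀] using (hcoord _ _ _).trans ((hg (s n).1).dist_le_mul x x₀)
  let F : X → lp (fun _ : ℕ => ℝ) ∞ := fun x => ⟨_, hmem x⟩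
  have hF : ∀ x y n, ‖(F x - F y) n‖ = |g (s n).1 x (s n).2 - g (s n).1 y (s n).2| :=
    fun _ _ _ => rfl
  refine ⟨F, LipschitzWith.of_dist_le_mul fun x y => ?_, fun i x y => ?_⟩
  · rw [dist_eq_norm]
    refine lp.norm_le_of_forall_le (by positivity) fun n => ?_
    exact hF x y n ▸ (hcoord _ _ _).trans ((hg _).dist_le_mul x y)
  · rw [dist_eq_norm, dist_eq_norm]
    refine lp.norm_le_of_forall_le (norm_nonneg _) fun k => ?_
    obtain ⟨n, hn⟩ := hs (i, k)
    have := lp.norm_apply_le_norm ENNReal.top_ne_zero (F x - F y) n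
    rw [hF, hn] at this
    simpa using this

theorem lipschitz_embeds_into_linfty_of_lipschitz_almostUncollapsed_general
    {X : Type*} [NormedAddCommGroup X] [NormedSpace ℝ X]
    (f : X → lp (fun _ : ℕ => ℝ) ⊤) (hf : ∃ K : ℝ≥0, LipschitzWith K f)
    (hu : AlmostUncollapsed f) :
    ∃ (F : X → lp (fun _ : ℕ => ℝ) ⊤) (c C : ℝ), 0 < c ∧ 0 < C ∧
      ∀ x y : X, c * ‖x - y‖ ≤ ‖F x - F y‖ ∧ ‖F x - F y‖ ≤ C * ‖x - y‖ := by
  obtain ⟨K, hK⟩ := hf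
  obtain ⟨t, ht, hρ⟩ := hu
  obtain ⟨F, hF, hFge⟩ := exists_lipschitz_linfty_forall_dist_le
    (fun q : ℚ => rescaleAtZero f q) (fun q => lipschitzWith_rescaleAtZero hK q) 0
    (fun q => rescaleAtZero_zero f q)
  refine ⟨F, exactComp f t / (2 * t), K + 1, by positivity, by positivity, fun x y => ⟨?_, ?_⟩⟩
  · obtain rfl | hxy := eq_or_ne x y
    · simp
    obtain ⟨q, hq⟩ := hK.exists_rat_le_dist_rescaleAtZero ht hρ
      (fun u w => exactComp_le_dist f) hxy
    simpa only [dist_eq_norm] using hq.trans (hFge q x y)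
  · calc ‖F x - F y‖ ≤ K * ‖x - y‖ := by simpa only [dist_eq_norm] using hF.dist_le_mul x y
      _ ≤ (K + 1) * ‖x - y‖ := by gcongr; linarith

/-- If there is a Lipschitz almost uncollapsed map X → ℓ_∞, then X Lipschitz embeds
into ℓ_∞. -/
theorem lipschitz_embeds_into_linfty_of_lipschitz_almostUncollapsed
    {X : Type*} [NormedAddCommGroup X] [NormedSpace ℝ X] [CompleteSpace X]
    (f : X → lp (fun _ : ℕ => ℝ) ⊤) (hf : ∃ K : ℝ≥0, LipschitzWith K f)
    (hu : AlmostUncollapsed f) :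
    ∃ (F : X → lp (fun _ : ℕ => ℝ) ⊤) (c C : ℝ), 0 < c ∧ 0 < C ∧
      ∀ x y : X, c * ‖x - y‖ ≤ ‖F x - F y‖ ∧ ‖F x - F y‖ ≤ C * ‖x - y‖ :=
  lipschitz_embeds_into_linfty_of_lipschitz_almostUncollapsed_general f hf hu
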